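/- Pretty-good measurement error relation: For all d×d complex positive semidefinite matrices A and B such that A + B is positive definite (invertible), Tr[ A·(A+B)^{−1/2}·B·(A+B)^{−1/2} ] ≤ (1/2)·Tr[A+B] − (1/2)·‖A − B‖₁, where (A+B)^{−1/2} is the inverse of the positive definite square root of A+B. -/

import Mathlib

/-!
Put `T = A + B`, `Δ = A - B` and `S = T^{-1/2}`. Since `S T S = 1`, writing `A = (T + Δ)/2` and
`B = (T - Δ)/2` gives `4 Tr[A S B S] = Tr T - Tr[Δ S Δ S]`, so it suffices to show
`2 ‖Δ‖₁ ≤ Tr[Δ S Δ S] + Tr T`. Write `‖Δ‖₁ = Tr[Δ W]` with `W = sign Δ`, a Hermitian involution.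
The AM-GM inequality for the Hilbert-Schmidt inner product of `T^{-1/4} Δ T^{-1/4}` and
`T^{1/4} W T^{1/4}` gives `2 Tr[Δ W] ≤ Tr[Δ S Δ S] + Tr[W T^{1/2} W T^{1/2}]`, and the last
term is `Re Tr[M²] ≤ Tr[M Mᴴ] = Tr T` for `M = W T^{1/2}`.
-/

open scoped ComplexOrder Classical

noncomputable section

namespace QHT

variable {ι : Type*} [Fintype ι] [DecidableEq ι]

/-- The positive semidefinite square root `U √D Uᴴ` of a positive semidefinite matrix
(the former Mathlib `Matrix.PosSemidef.sqrt`, spelled out). -/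
def psdSqrt {A : Matrix ι ι ℂ} (hA : A.PosSemidef) : Matrix ι ι ℂ :=
  (hA.1.eigenvectorUnitary : Matrix ι ι ℂ) *
    Matrix.diagonal (fun i => ((Real.sqrt (hA.1.eigenvalues i) : ℝ) : ℂ)) *
    (star (hA.1.eigenvectorUnitary : Matrix ι ι ℂ))

/-- Trace norm of a complex matrix: `Tr[√(Aᴴ A)]`. -/
def traceNorm (A : Matrix ι ι ℂ) : ℝ :=
  ((psdSqrt (Matrix.posSemidef_conjTranspose_mul_self A)).trace).re

/-- A quantum state: positive semidefinite with unit trace. -/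
def IsState (ρ : Matrix ι ι ℂ) : Prop := ρ.PosSemidef ∧ ρ.trace = 1

/-- Positive semidefinite square root (junk value `0` off the PSD matrices). -/
def matSqrt (A : Matrix ι ι ℂ) : Matrix ι ι ℂ :=
  if h : A.PosSemidef then psdSqrt h else 0

/-- Real power of a Hermitian matrix, applying `x ↦ x ^ s` to positive
eigenvalues and `x ↦ 0` to the remaining ones (so `A ^ 0` is the support
projection); junk value `0` off the Hermitian matrices. -/
def matRpow (A : Matrix ι ι ℂ) (s : ℝ) : Matrix ι ι ℂ :=
  if h : A.IsHermitian then
    (h.eigenvectorUnitary : Matrix ι ι ℂ) *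
      Matrix.diagonal (fun i =>
        ((if 0 < h.eigenvalues i then (h.eigenvalues i) ^ s else 0 : ℝ) : ℂ)) *
      (star (h.eigenvectorUnitary : Matrix ι ι ℂ))
  else 0

/-- Fidelity `F(ρ,σ) = ‖√ρ √σ‖₁²`. -/
def Fid (ρ σ : Matrix ι ι ℂ) : ℝ := (traceNorm (matSqrt ρ * matSqrt σ)) ^ 2

/-- Holevo fidelity `F_H(ρ,σ) = (Tr[√ρ √σ])²`. -/
def FidH (ρ σ : Matrix ι ι ℂ) : ℝ := (((matSqrt ρ * matSqrt σ).trace).re) ^ 2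

/-- `Q_s(A‖B) = Tr[A^s B^{1-s}]`. -/
def Qs (s : ℝ) (A B : Matrix ι ι ℂ) : ℝ := ((matRpow A s * matRpow B (1 - s)).trace).re

/-- `Q_min(A‖B) = min_{s ∈ [0,1]} Q_s(A‖B)`. -/
def Qmin (A B : Matrix ι ι ℂ) : ℝ :=
  sInf { x : ℝ | ∃ s ∈ Set.Icc (0 : ℝ) 1, x = Qs s A B }

/-- Bures distance. -/
def dB (ρ σ : Matrix ι ι ℂ) : ℝ := Real.sqrt (2 * (1 - Real.sqrt (Fid ρ σ)))

/-- Quantum Hellinger distance. -/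
def dH (ρ σ : Matrix ι ι ℂ) : ℝ := Real.sqrt (2 * (1 - Real.sqrt (FidH ρ σ)))

/-- `n`-fold Kronecker (tensor) power of a matrix. -/
def tensorPow {d : ℕ} (A : Matrix (Fin d) (Fin d) ℂ) (n : ℕ) :
    Matrix (Fin n → Fin d) (Fin n → Fin d) ℂ :=
  Matrix.of fun i j => ∏ k, A (i k) (j k)

/-- Optimal error probability of symmetric binary quantum hypothesis testing
with `n` copies. -/
def pErr {d : ℕ} (p : ℝ) (ρ : Matrix (Fin d) (Fin d) ℂ) (q : ℝ)
    (σ : Matrix (Fin d) (Fin d) ℂ) (n : ℕ) : ℝ :=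
  sInf { x : ℝ | ∃ Λ : Matrix (Fin n → Fin d) (Fin n → Fin d) ℂ,
    Λ.PosSemidef ∧ (1 - Λ).PosSemidef ∧
    x = p * (((1 - Λ) * tensorPow ρ n).trace).re + q * ((Λ * tensorPow σ n).trace).re }

/-- Sample complexity of symmetric binary quantum hypothesis testing. -/
def sampleComplexity {d : ℕ} (p : ℝ) (ρ : Matrix (Fin d) (Fin d) ℂ) (q : ℝ)
    (σ : Matrix (Fin d) (Fin d) ℂ) (ε : ℝ) : ℕ :=
  sInf { n : ℕ | 1 ≤ n ∧ pErr p ρ q σ n ≤ ε }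

/-- Optimal type II error `β_ε(ρ‖σ)` of asymmetric hypothesis testing. -/
def betaErr (ε : ℝ) (ρ σ : Matrix ι ι ℂ) : ℝ :=
  sInf { x : ℝ | ∃ Λ : Matrix ι ι ℂ, Λ.PosSemidef ∧ (1 - Λ).PosSemidef ∧
    (((1 - Λ) * ρ).trace).re ≤ ε ∧ x = ((Λ * σ).trace).re }

/-- Sample complexity of asymmetric binary quantum hypothesis testing. -/
def sampleComplexityAsym {d : ℕ} (ρ σ : Matrix (Fin d) (Fin d) ℂ) (ε δ : ℝ) : ℕ :=
  sInf { n : ℕ | 1 ≤ n ∧ betaErr ε (tensorPow ρ n) (tensorPow σ n) ≤ δ }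

/-- Petz–Rényi divergence `D_α(ρ‖σ)`. -/
def petzRenyi (α : ℝ) (ρ σ : Matrix ι ι ℂ) : ℝ :=
  (1 / (α - 1)) * Real.log (((matRpow ρ α * matRpow σ (1 - α)).trace).re)

/-- Sandwiched Rényi divergence `D̃_α(ρ‖σ)`. -/
def sandwichedRenyi (α : ℝ) (ρ σ : Matrix ι ι ℂ) : ℝ :=
  (1 / (α - 1)) * Real.log
    (((matRpow (matRpow σ ((1 - α) / (2 * α)) * ρ * matRpow σ ((1 - α) / (2 * α))) α).trace).re)

end QHT

namespace Matrix

variable {ι : Type*} [Fintype ι]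

theorem two_mul_re_trace_conjTranspose_mul_le (M N : Matrix ι ι ℂ) :
    2 * (Mᴴ * N).trace.re ≤ (Mᴴ * M).trace.re + (Nᴴ * N).trace.re := by
  have hnonneg : 0 ≤ ((M - N)ᴴ * (M - N)).trace.re :=
    Complex.nonneg_iff.mp (posSemidef_conjTranspose_mul_self _).trace_nonneg |>.1
  have hconj : (Nᴴ * M).trace.re = (Mᴴ * N).trace.re := by
    rw [← conjTranspose_conjTranspose M, ← conjTranspose_mul, trace_conjTranspose,
      conjTranspose_conjTranspose, Complex.star_def, Complex.conj_re]
  have hexp : (M - N)ᴴ * (M - N) = Mᴴ * M - Mᴴ * N - Nᴴ * M + Nᴴ * N := by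
    rw [conjTranspose_sub]; noncomm_ring
  rw [hexp, trace_add, trace_sub, trace_sub] at hnonneg
  simp only [Complex.add_re, Complex.sub_re] at hnonneg
  linarith

theorem re_trace_mul_self_le_re_trace_mul_conjTranspose (M : Matrix ι ι ℂ) :
    (M * M).trace.re ≤ (M * Mᴴ).trace.re := by
  have h := two_mul_re_trace_conjTranspose_mul_le Mᴴ M
  rw [conjTranspose_conjTranspose, trace_mul_comm Mᴴ M] at h
  linarith

theorem re_trace_mul_mul_mul_le_of_mul_self_eq_one [DecidableEq ι] {W H : Matrix ι ι ℂ}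
    (hW : W.IsHermitian) (hH : H.IsHermitian) (hW2 : W * W = 1) :
    (W * H * W * H).trace.re ≤ (H * H).trace.re := by
  calc (W * H * W * H).trace.re = (W * H * (W * H)).trace.re := by
        simp only [Matrix.mul_assoc]
    _ ≤ (W * H * (W * H)ᴴ).trace.re := re_trace_mul_self_le_re_trace_mul_conjTranspose _
    _ = (H * H).trace.re := by
        rw [conjTranspose_mul, hW.eq, hH.eq, trace_mul_comm,
          show H * W * (W * H) = H * (W * W) * H by simp only [Matrix.mul_assoc], hW2,
          Matrix.mul_one]

theorem trace_conj_mul_conj {R : Type*} [CommSemiring R] (C X Y : Matrix ι ι R) :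
    (C * X * C * (C * Y * C)).trace = (X * (C * C) * Y * (C * C)).trace := by
  rw [show C * X * C * (C * Y * C) = C * (X * (C * C) * Y * C) by simp only [Matrix.mul_assoc],
    trace_mul_comm, Matrix.mul_assoc _ C C]

theorem trace_mul_eq_trace_conj_mul_conj {R : Type*} [CommSemiring R] [DecidableEq ι]
    {P Q : Matrix ι ι R} (hPQ : P * Q = 1) (X Y : Matrix ι ι R) :
    (X * Y).trace = (P * X * P * (Q * Y * Q)).trace := by
  rw [show P * X * P * (Q * Y * Q) = P * X * (P * Q) * Y * Q by simp only [Matrix.mul_assoc],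
    hPQ, Matrix.mul_one, trace_mul_comm (P * X * Y), ← Matrix.mul_assoc, ← Matrix.mul_assoc,
    mul_eq_one_comm.mp hPQ, Matrix.one_mul]

theorem four_mul_trace_mul_mul_mul_eq {R : Type*} [CommRing R] [DecidableEq ι]
    {A B S : Matrix ι ι R} (hS : S * (A + B) * S = 1) :
    4 * (A * S * B * S).trace = (A + B).trace - ((A - B) * S * (A - B) * S).trace := by
  have hexp : (4 : ℕ) • (A * S * B * S) = (A + B) * S * (A + B) * S - (A + B) * S * (A - B) * S
      + (A - B) * S * (A + B) * S - (A - B) * S * (A - B) * S := by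
    noncomm_ring
  have hsum : ((A + B) * S * (A + B) * S).trace = (A + B).trace := by
    rw [show (A + B) * S * (A + B) * S = (A + B) * (S * (A + B) * S) by
      simp only [Matrix.mul_assoc], hS, Matrix.mul_one]
  have hcross : ((A + B) * S * (A - B) * S).trace = ((A - B) * S * (A + B) * S).trace := by
    rw [show (A + B) * S * (A - B) * S = (A + B) * S * ((A - B) * S) by
      simp only [Matrix.mul_assoc], trace_mul_comm, ← Matrix.mul_assoc]
  have := congrArg trace hexp
  rw [trace_smul, trace_sub, trace_add, trace_sub, hsum, hcross, nsmul_eq_mul,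
    Nat.cast_ofNat] at this
  rw [this]
  abel

end Matrix

namespace QHT

open Matrix

variable {ι : Type*} [Fintype ι] [DecidableEq ι]

open scoped MatrixOrder

theorem matRpow_eq_cfc {A : Matrix ι ι ℂ} (hA : A.IsHermitian) (s : ℝ) :
    matRpow A s = cfc (fun x : ℝ => if 0 < x then x ^ s else 0) A := by
  rw [hA.cfc_eq, IsHermitian.cfc, Unitary.conjStarAlgAut_apply, matRpow, dif_pos hA]
  rfl

theorem isHermitian_matRpow (A : Matrix ι ι ℂ) (s : ℝ) : (matRpow A s).IsHermitian := by
  by_cases hA : A.IsHermitian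
  · rw [matRpow_eq_cfc hA]
    exact IsSelfAdjoint.isHermitian (cfc_predicate _ A)
  · rw [matRpow, dif_neg hA]
    exact isHermitian_zero

theorem matRpow_mul_matRpow {A : Matrix ι ι ℂ} (hA : A.PosDef) (s t : ℝ) :
    matRpow A s * matRpow A t = matRpow A (s + t) := by
  simp only [matRpow_eq_cfc hA.1]
  rw [← cfc_mul _ _ A (A.finite_real_spectrum.continuousOn _)
    (A.finite_real_spectrum.continuousOn _)]
  refine cfc_congr fun x hx => ?_
  simp only [hA.isStrictlyPositive.spectrum_pos hx, if_true, Real.rpow_add]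

theorem matRpow_zero {A : Matrix ι ι ℂ} (hA : A.PosDef) : matRpow A 0 = 1 := by
  rw [matRpow_eq_cfc hA.1, cfc_congr (g := fun _ => 1) fun x hx => ?_,
    cfc_const_one ℝ A hA.1.isSelfAdjoint]
  simp [hA.isStrictlyPositive.spectrum_pos hx]

theorem matRpow_one {A : Matrix ι ι ℂ} (hA : A.PosDef) : matRpow A 1 = A := by
  rw [matRpow_eq_cfc hA.1, cfc_congr (g := id) fun x hx => ?_, cfc_id ℝ A hA.1.isSelfAdjoint]
  simp [hA.isStrictlyPositive.spectrum_pos hx]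

theorem psdSqrt_eq_cfc {A : Matrix ι ι ℂ} (hA : A.PosSemidef) :
    psdSqrt hA = cfc Real.sqrt A := by
  rw [hA.1.cfc_eq, IsHermitian.cfc, Unitary.conjStarAlgAut_apply, psdSqrt]
  rfl

theorem exists_re_trace_mul_eq_traceNorm {A : Matrix ι ι ℂ} (hA : A.IsHermitian) :
    ∃ W : Matrix ι ι ℂ, W.IsHermitian ∧ W * W = 1 ∧ (A * W).trace.re = traceNorm A := by
  have hcont (f : ℝ → ℝ) : ContinuousOn f (spectrum ℝ A) := A.finite_real_spectrum.continuousOn f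
  refine ⟨cfc (fun x : ℝ => if x < 0 then -1 else 1) A,
    IsSelfAdjoint.isHermitian (cfc_predicate _ A), ?_, ?_⟩
  · rw [← cfc_mul _ _ A (hcont _) (hcont _), cfc_congr (g := fun _ => 1) fun x _ => ?_,
      cfc_const_one ℝ A hA.isSelfAdjoint]
    split_ifs <;> norm_num
  · have hAA : Aᴴ * A = cfc (fun x : ℝ => x ^ 2) A := by
      rw [hA.eq, cfc_pow_id A 2 hA.isSelfAdjoint, sq]
    have habs : psdSqrt (posSemidef_conjTranspose_mul_self A) = cfc (fun x : ℝ => |x|) A := by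
      rw [psdSqrt_eq_cfc, hAA, ← cfc_comp _ _ A]
      exact cfc_congr fun x _ => Real.sqrt_sq_eq_abs x
    rw [traceNorm, habs]
    nth_rewrite 1 [← cfc_id' ℝ A hA.isSelfAdjoint]
    rw [← cfc_mul _ _ A (hcont _) (hcont _), cfc_congr fun x _ => ?_]
    split_ifs with hx
    · simp [abs_of_neg hx]
    · simp [abs_of_nonneg (not_lt.mp hx)]

theorem two_mul_re_trace_mul_le_of_posDef {X Y P : Matrix ι ι ℂ} (hX : X.IsHermitian)
    (hY : Y.IsHermitian) (hP : P.PosDef) (s : ℝ) :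
    2 * (X * Y).trace.re ≤ (X * matRpow P (-s) * X * matRpow P (-s)).trace.re
      + (Y * matRpow P s * Y * matRpow P s).trace.re := by
  set Q := matRpow P (-s / 2)
  set R := matRpow P (s / 2)
  have hQ : Q.IsHermitian := isHermitian_matRpow P _
  have hR : R.IsHermitian := isHermitian_matRpow P _
  have hQR : Q * R = 1 := by
    rw [matRpow_mul_matRpow hP, show -s / 2 + s / 2 = 0 by ring, matRpow_zero hP]
  have hQQ : Q * Q = matRpow P (-s) := by rw [matRpow_mul_matRpow hP, add_halves]
  have hRR : R * R = matRpow P s := by rw [matRpow_mul_matRpow hP, add_halves]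
  have hconj {C M : Matrix ι ι ℂ} (hC : C.IsHermitian) (hM : M.IsHermitian) :
      (C * M * C)ᴴ = C * M * C := by
    rw [conjTranspose_mul, conjTranspose_mul, hC.eq, hM.eq, Matrix.mul_assoc]
  have h := two_mul_re_trace_conjTranspose_mul_le (Q * X * Q) (R * Y * R)
  rwa [hconj hQ hX, hconj hR hY, ← trace_mul_eq_trace_conj_mul_conj hQR, trace_conj_mul_conj,
    trace_conj_mul_conj, hQQ, hRR] at h

/-- **Pretty-good measurement error relation**: for positive semidefinite
`A, B` with `A + B` positive definite,
`Tr[A (A+B)^{-1/2} B (A+B)^{-1/2}] ≤ (1/2) Tr[A+B] − (1/2) ‖A − B‖₁`. -/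
theorem pretty_good_measurement_bound {ι : Type*} [Fintype ι] [DecidableEq ι]
    (A B : Matrix ι ι ℂ) (hA : A.PosSemidef) (hB : B.PosSemidef)
    (hAB : (A + B).PosDef) :
    ((A * matRpow (A + B) (-(1 / 2)) * B * matRpow (A + B) (-(1 / 2))).trace).re
      ≤ (1 / 2) * (((A + B).trace).re) - (1 / 2) * traceNorm (A - B) := by
  have hΔ : (A - B).IsHermitian := hA.1.sub hB.1
  obtain ⟨W, hW, hW2, hWtr⟩ := exists_re_trace_mul_eq_traceNorm hΔ
  have hSTS : matRpow (A + B) (-(1 / 2)) * (A + B) * matRpow (A + B) (-(1 / 2)) = 1 := by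
    nth_rewrite 2 [← matRpow_one hAB]
    rw [matRpow_mul_matRpow hAB, matRpow_mul_matRpow hAB,
      show -(1 / 2) + 1 + -(1 / 2) = (0 : ℝ) by norm_num, matRpow_zero hAB]
  have hpgm := congrArg Complex.re (four_mul_trace_mul_mul_mul_eq hSTS)
  have hamgm := two_mul_re_trace_mul_le_of_posDef hΔ hW hAB (1 / 2)
  have hsign :=
    re_trace_mul_mul_mul_le_of_mul_self_eq_one hW (isHermitian_matRpow (A + B) (1 / 2)) hW2
  rw [matRpow_mul_matRpow hAB, add_halves, matRpow_one hAB] at hsign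
  simp only [Complex.sub_re, Complex.mul_re, Complex.re_ofNat, Complex.im_ofNat, zero_mul,
    sub_zero] at hpgm
  linarith

end QHT

end
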